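/- In dimension d = 1, let γ > 0, h > 0, V ∈ C^∞(ℝ;ℝ), and set φ(x,y) = y²/2 + V(x) on ℝ², with A = (1/2)·[[0,1],[−1,γ]] : (ℝ²)* → ℝ². Then the twisted Witten Laplacian on functions, −Δ_A⁽⁰⁾ = d_φ^{A,*} d_φ restricted to 0-forms, equals the Kramers–Fokker–Planck operator: −Δ_A⁽⁰⁾ u = y·h∂ₓu − V'(x)·h∂_y u + (γ/2)(−h∂_y + y)(h∂_y + y)u for all u ∈ C^∞(ℝ²). -/

import Mathlib

open Finset

noncomputable section

abbrev FormIdx (n k : ℕ) := {s : Finset (Fin n) // s.card = k}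

abbrev KForm (n k : ℕ) := FormIdx n k → ℝ

def posIn {n : ℕ} (i : Fin n) (s : Finset (Fin n)) : ℕ := (s.filter (· < i)).card

/-- left exterior multiplication by the one-form `ω` -/
def wedgeOne {n k : ℕ} (ω : Fin n → ℝ) (u : KForm n k) : KForm n (k + 1) :=
  fun S => ∑ i : Fin n, if h : i ∈ S.1 then
    (-1 : ℝ) ^ (posIn i S.1) * ω i * u ⟨S.1.erase i, by
      simp [Finset.card_erase_of_mem h, S.2]⟩ else 0

/-- interior multiplication (contraction) by the vector `x` -/
def contractV {n k : ℕ} (x : Fin n → ℝ) (v : KForm n (k + 1)) : KForm n k :=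
  fun T => ∑ i : Fin n, if h : i ∉ T.1 then
    (-1 : ℝ) ^ (posIn i (insert i T.1)) * x i * v ⟨insert i T.1, by
      rw [Finset.card_insert_of_notMem h, T.2]⟩ else 0

def pderiv {n k : ℕ} (i : Fin n) (u : (Fin n → ℝ) → KForm n k) :
    (Fin n → ℝ) → KForm n k :=
  fun x S => fderiv ℝ (fun y => u y S) x (Pi.single i 1)

/-- the exterior derivative `d = ∑ᵢ dxᵢ ∧ ∂ᵢ` -/
def extd {n k : ℕ} (u : (Fin n → ℝ) → KForm n k) : (Fin n → ℝ) → KForm n (k + 1) :=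
  fun x => ∑ i : Fin n, wedgeOne (Pi.single i 1) (pderiv i u x)

/-- the Witten differential `d_φ = h d + (dφ)∧` -/
def wittenD {n k : ℕ} (h : ℝ) (φ : (Fin n → ℝ) → ℝ)
    (u : (Fin n → ℝ) → KForm n k) : (Fin n → ℝ) → KForm n (k + 1) :=
  fun x => h • extd u x + wedgeOne (fun i => fderiv ℝ φ x (Pi.single i 1)) (u x)

/-- the Witten codifferential `d_φ^{A,*} = ∑ⱼ (−h∂ⱼ + ∂ⱼφ) ∘ (A dxⱼ)⌟`
(the formal adjoint of `d_φ` with respect to the pairing `(·|·)_A`) -/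
def wittenCoD {n k : ℕ} (A : Matrix (Fin n) (Fin n) ℝ) (h : ℝ) (φ : (Fin n → ℝ) → ℝ)
    (u : (Fin n → ℝ) → KForm n (k + 1)) : (Fin n → ℝ) → KForm n k :=
  fun x => ∑ j : Fin n,
    ((-h) • pderiv j (fun y => contractV (fun i => A i j) (u y)) x
      + (fderiv ℝ φ x (Pi.single j 1)) • contractV (fun i => A i j) (u x))

/-- partial derivative of a scalar function in direction `i` -/
def D2 (i : Fin 2) (f : (Fin 2 → ℝ) → ℝ) (z : Fin 2 → ℝ) : ℝ :=
  fderiv ℝ f z (Pi.single i 1)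

section Helpers

lemma contractV_zero (v : KForm 2 1) (a : Fin 2 → ℝ) (T : FormIdx 2 0) :
    contractV a v T = a 0 * v ⟨{0}, rfl⟩ + a 1 * v ⟨{1}, rfl⟩ := by
  obtain ⟨t, ht⟩ := T
  rw [Finset.card_eq_zero] at ht
  subst ht
  simp [contractV, Fin.sum_univ_two, posIn, Finset.filter_singleton]

lemma wedgeOne_single (ω : Fin 2 → ℝ) (u : KForm 2 0) (i : Fin 2)
    (p : ({i} : Finset (Fin 2)).card = 1) :
    wedgeOne ω u ⟨{i}, p⟩ = ω i * u ⟨∅, rfl⟩ := by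
  fin_cases i <;>
    simp [wedgeOne, Fin.sum_univ_two, posIn, Finset.filter_singleton]

lemma extd_single (u : (Fin 2 → ℝ) → KForm 2 0) (y : Fin 2 → ℝ) (i : Fin 2)
    (p : ({i} : Finset (Fin 2)).card = 1) :
    extd u y ⟨{i}, p⟩ = pderiv i u y ⟨∅, rfl⟩ := by
  have h0 : extd u y ⟨{i}, p⟩
      = ∑ j : Fin 2, wedgeOne (Pi.single j 1) (pderiv j u y) ⟨{i}, p⟩ := by
    rw [extd]; exact Finset.sum_apply _ _ _
  rw [h0, Fin.sum_univ_two, wedgeOne_single, wedgeOne_single]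
  fin_cases i <;> simp

lemma wittenD_single (h : ℝ) (φ : (Fin 2 → ℝ) → ℝ) (u0 : (Fin 2 → ℝ) → KForm 2 0)
    (y : Fin 2 → ℝ) (i : Fin 2) (p : ({i} : Finset (Fin 2)).card = 1) :
    wittenD h φ u0 y ⟨{i}, p⟩
      = h * pderiv i u0 y ⟨∅, rfl⟩
        + fderiv ℝ φ y (Pi.single i 1) * u0 y ⟨∅, rfl⟩ := by
  rw [wittenD]
  show h • extd u0 y ⟨{i}, p⟩ + wedgeOne _ (u0 y) ⟨{i}, p⟩ = _
  rw [extd_single, wedgeOne_single]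
  simp [smul_eq_mul]

lemma D2_add {f g : (Fin 2 → ℝ) → ℝ} {z : Fin 2 → ℝ} (i : Fin 2)
    (hf : DifferentiableAt ℝ f z) (hg : DifferentiableAt ℝ g z) :
    D2 i (fun y => f y + g y) z = D2 i f z + D2 i g z := by
  simp [D2, fderiv_fun_add hf hg]

lemma D2_const_mul {g : (Fin 2 → ℝ) → ℝ} {z : Fin 2 → ℝ} (i : Fin 2) (c : ℝ)
    (hg : DifferentiableAt ℝ g z) :
    D2 i (fun y => c * g y) z = c * D2 i g z := by
  simp [D2, fderiv_const_mul hg]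

lemma D2_mul {f g : (Fin 2 → ℝ) → ℝ} {z : Fin 2 → ℝ} (i : Fin 2)
    (hf : DifferentiableAt ℝ f z) (hg : DifferentiableAt ℝ g z) :
    D2 i (fun y => f y * g y) z = D2 i f z * g z + f z * D2 i g z := by
  rw [D2, fderiv_fun_mul hf hg]
  simp [D2]
  ring

lemma D2_coord (i j : Fin 2) (z : Fin 2 → ℝ) :
    D2 i (fun y => y j) z = (Pi.single i 1 : Fin 2 → ℝ) j := by
  have h : HasFDerivAt (fun y : Fin 2 → ℝ => y j)
      (ContinuousLinearMap.proj j : (Fin 2 → ℝ) →L[ℝ] ℝ) z := by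
    have h := (ContinuousLinearMap.proj (R := ℝ) (φ := fun _ : Fin 2 => ℝ) j).hasFDerivAt (x := z)
    exact h
  rw [D2, h.fderiv]
  rfl

end Helpers

/-- In dimension `d = 1`, with `φ(x,y) = y²/2 + V(x)` and `A = ½ [[0,1],[−1,γ]]`, the
twisted Witten Laplacian on functions `−Δ_A⁽⁰⁾ = d_φ^{A,*} d_φ` is the
Kramers–Fokker–Planck operator
`y·h∂ₓ − V'(x)·h∂_y + (γ/2)(−h∂_y + y)(h∂_y + y)`. -/
theorem wittenLaplacian_eq_KFP (γ h : ℝ) (hγ : 0 < γ) (hh : 0 < h)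
    (V : ℝ → ℝ) (hV : ContDiff ℝ (⊤ : ℕ∞) V)
    (u : (Fin 2 → ℝ) → ℝ) (hu : ContDiff ℝ (⊤ : ℕ∞) u) :
    let A : Matrix (Fin 2) (Fin 2) ℝ := ((1 : ℝ)/2) • !![0, 1; -1, γ]
    let φ : (Fin 2 → ℝ) → ℝ := fun z => (z 1)^2/2 + V (z 0)
    let u0 : (Fin 2 → ℝ) → KForm 2 0 := fun z _ => u z
    let w : (Fin 2 → ℝ) → ℝ := fun z => h * D2 1 u z + z 1 * u z
    ∀ (z : Fin 2 → ℝ) (S : FormIdx 2 0),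
      wittenCoD A h φ (wittenD h φ u0) z S
        = z 1 * (h * D2 0 u z) - deriv V (z 0) * (h * D2 1 u z)
          + γ/2 * (-(h * D2 1 w z) + z 1 * w z) := by
  intro A φ u0 w z S
  have hA00 : A 0 0 = 0 := by simp [A]
  have hA01 : A 0 1 = 1/2 := by simp [A]
  have hA10 : A 1 0 = -(1/2) := by simp [A]
  have hA11 : A 1 1 = γ/2 := by simp [A]; ring
  -- differentiability facts
  have hVdiff : Differentiable ℝ V := hV.differentiable (by simp)
  have hud : Differentiable ℝ u := hu.differentiable (by simp)
  have hfd : ContDiff ℝ (⊤ : ℕ∞) (fderiv ℝ u) := hu.fderiv_right (by simp)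
  have hDu : ∀ i : Fin 2, Differentiable ℝ (fun y => D2 i u y) := by
    intro i
    have h1 : ContDiff ℝ (⊤ : ℕ∞) fun y => (fderiv ℝ u y) (Pi.single i 1) :=
      hfd.clm_apply contDiff_const
    exact h1.differentiable (by simp)
  have hdV : Differentiable ℝ (deriv V) := by
    have h1 : ContDiff ℝ (⊤ : ℕ∞) fun y => (fderiv ℝ V y) 1 :=
      (hV.fderiv_right (by simp)).clm_apply contDiff_const
    exact h1.differentiable (by simp)
  have hp : ∀ (j : Fin 2) (y : Fin 2 → ℝ), HasFDerivAt (fun y : Fin 2 → ℝ => y j)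
      (ContinuousLinearMap.proj j : (Fin 2 → ℝ) →L[ℝ] ℝ) y := by
    intro j y
    have h1 := (ContinuousLinearMap.proj (R := ℝ) (φ := fun _ : Fin 2 => ℝ) j).hasFDerivAt (x := y)
    exact h1
  have hcoord : ∀ j : Fin 2, Differentiable ℝ (fun y : Fin 2 → ℝ => y j) :=
    fun j y => (hp j y).differentiableAt
  have hdV0 : Differentiable ℝ (fun y : Fin 2 → ℝ => deriv V (y 0)) :=
    hdV.comp (hcoord 0)
  -- derivative of φ
  have hφD : ∀ y : Fin 2 → ℝ, HasFDerivAt φ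
      ((y 1) • (ContinuousLinearMap.proj 1 : (Fin 2 → ℝ) →L[ℝ] ℝ)
        + (deriv V (y 0)) • (ContinuousLinearMap.proj 0 : (Fin 2 → ℝ) →L[ℝ] ℝ)) y := by
    intro y
    have h1 : HasDerivAt (fun t : ℝ => t ^ 2 / 2) (y 1) (y 1) := by
      simpa using (hasDerivAt_pow 2 (y 1)).div_const 2
    have h2 : HasDerivAt V (deriv V (y 0)) (y 0) := (hVdiff (y 0)).hasDerivAt
    have hA := h1.comp_hasFDerivAt y (hp 1 y)
    have hB := h2.comp_hasFDerivAt y (hp 0 y)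
    exact hA.add hB
  have hφ0 : ∀ y : Fin 2 → ℝ, fderiv ℝ φ y (Pi.single 0 1) = deriv V (y 0) := by
    intro y
    rw [(hφD y).fderiv]
    simp [Pi.single_apply]
  have hφ1 : ∀ y : Fin 2 → ℝ, fderiv ℝ φ y (Pi.single 1 1) = y 1 := by
    intro y
    rw [(hφD y).fderiv]
    simp [Pi.single_apply]
  -- the one-form wittenD h φ u0
  have hW0 : ∀ (y : Fin 2 → ℝ) (p : ({0} : Finset (Fin 2)).card = 1),
      wittenD h φ u0 y ⟨{0}, p⟩ = h * D2 0 u y + deriv V (y 0) * u y := by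
    intro y p
    rw [wittenD_single, hφ0 y]
    rfl
  have hW1 : ∀ (y : Fin 2 → ℝ) (p : ({1} : Finset (Fin 2)).card = 1),
      wittenD h φ u0 y ⟨{1}, p⟩ = h * D2 1 u y + y 1 * u y := by
    intro y p
    rw [wittenD_single, hφ1 y]
    rfl
  -- contraction evaluated
  have hC : ∀ (j : Fin 2) (y : Fin 2 → ℝ) (T : FormIdx 2 0),
      contractV (fun i => A i j) (wittenD h φ u0 y) T
        = A 0 j * (h * D2 0 u y + deriv V (y 0) * u y)
          + A 1 j * (h * D2 1 u y + y 1 * u y) := by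
    intro j y T
    rw [contractV_zero]; exact congrArg₂ (fun a b => A 0 j * a + A 1 j * b) (hW0 y rfl) (hW1 y rfl)
  -- expand the codifferential
  have hsum : wittenCoD A h φ (wittenD h φ u0) z S
      = ∑ j : Fin 2,
          (((-h) • pderiv j (fun y => contractV (fun i => A i j) (wittenD h φ u0 y)) z
            + (fderiv ℝ φ z (Pi.single j 1)) •
                contractV (fun i => A i j) (wittenD h φ u0 z)) S) := by
    rw [wittenCoD]
    exact Finset.sum_apply _ _ _
  -- pderiv terms as D2 of explicit functions
  have hP : ∀ j : Fin 2,
      pderiv j (fun y => contractV (fun i => A i j) (wittenD h φ u0 y)) z S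
        = D2 j (fun y => A 0 j * (h * D2 0 u y + deriv V (y 0) * u y)
            + A 1 j * (h * D2 1 u y + y 1 * u y)) z := by
    intro j
    have h1 : pderiv j (fun y => contractV (fun i => A i j) (wittenD h φ u0 y)) z S
        = D2 j (fun y => contractV (fun i => A i j) (wittenD h φ u0 y) S) z := rfl
    rw [h1]
    congr 1
    funext y
    rw [hC]
  -- differentiability of the building blocks
  have hv0 : Differentiable ℝ (fun y : Fin 2 → ℝ => h * D2 0 u y + deriv V (y 0) * u y) :=
    ((differentiable_const h).mul (hDu 0)).add (hdV0.mul hud)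
  have hv1 : Differentiable ℝ (fun y : Fin 2 → ℝ => h * D2 1 u y + y 1 * u y) :=
    ((differentiable_const h).mul (hDu 1)).add ((hcoord 1).mul hud)
  -- derivatives of the building blocks
  have hDv0 : ∀ i : Fin 2, D2 i (fun y : Fin 2 → ℝ => h * D2 0 u y + deriv V (y 0) * u y) z
      = h * D2 i (fun y => D2 0 u y) z
        + ((deriv (deriv V) (z 0) * (Pi.single i 1 : Fin 2 → ℝ) 0) * u z
            + deriv V (z 0) * D2 i u z) := by
    intro i
    have hdd : D2 i (fun y : Fin 2 → ℝ => deriv V (y 0)) z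
        = deriv (deriv V) (z 0) * (Pi.single i 1 : Fin 2 → ℝ) 0 := by
      have h2 : HasDerivAt (deriv V) (deriv (deriv V) (z 0)) (z 0) := (hdV (z 0)).hasDerivAt
      have h3 : HasFDerivAt (fun y : Fin 2 → ℝ => deriv V (y 0))
          (deriv (deriv V) (z 0) • (ContinuousLinearMap.proj 0 : (Fin 2 → ℝ) →L[ℝ] ℝ)) z :=
        by have := h2.comp_hasFDerivAt z (hp 0 z); exact this
      rw [D2, h3.fderiv]
      rfl
    rw [D2_add (f := fun y => h * D2 0 u y) (g := fun y => deriv V (y 0) * u y) i ((differentiable_const h).mul (hDu 0) z)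
        ((hdV0.mul hud) z),
      D2_const_mul i h ((hDu 0) z),
      D2_mul i (hdV0 z) (hud z), hdd]
  have hDv1 : ∀ i : Fin 2, D2 i (fun y : Fin 2 → ℝ => h * D2 1 u y + y 1 * u y) z
      = h * D2 i (fun y => D2 1 u y) z
        + ((Pi.single i 1 : Fin 2 → ℝ) 1 * u z + z 1 * D2 i u z) := by
    intro i
    rw [D2_add (f := fun y => h * D2 1 u y) (g := fun y => y 1 * u y) i ((differentiable_const h).mul (hDu 1) z)
        (((hcoord 1).mul hud) z),
      D2_const_mul i h ((hDu 1) z),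
      D2_mul i ((hcoord 1) z) (hud z),
      D2_coord]
  -- symmetry of second derivatives
  have hschwarz : D2 0 (fun y => D2 1 u y) z = D2 1 (fun y => D2 0 u y) z := by
    have hfdd : Differentiable ℝ (fderiv ℝ u) := hfd.differentiable (by simp)
    have key : ∀ a b : Fin 2 → ℝ,
        fderiv ℝ (fun y => fderiv ℝ u y a) z b = fderiv ℝ (fderiv ℝ u) z b a := by
      intro a b
      rw [fderiv_clm_apply (hfdd z) (differentiableAt_const a)]
      simp
    have hsym : IsSymmSndFDerivAt ℝ u z :=
      hu.contDiffAt.isSymmSndFDerivAt (by norm_num; exact WithTop.coe_le_coe.mpr le_top)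
    show fderiv ℝ (fun y => fderiv ℝ u y (Pi.single 1 1)) z (Pi.single 0 1)
        = fderiv ℝ (fun y => fderiv ℝ u y (Pi.single 0 1)) z (Pi.single 1 1)
    rw [key, key, hsym]
  -- put everything together
  rw [hsum, Fin.sum_univ_two]
  simp only [Pi.add_apply, Pi.smul_apply, smul_eq_mul]
  rw [hP 0, hP 1, hφ0 z, hφ1 z, hC 0 z, hC 1 z]
  have e0 : D2 0 (fun y => A 0 0 * (h * D2 0 u y + deriv V (y 0) * u y)
      + A 1 0 * (h * D2 1 u y + y 1 * u y)) z
      = A 0 0 * D2 0 (fun y : Fin 2 → ℝ => h * D2 0 u y + deriv V (y 0) * u y) z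
        + A 1 0 * D2 0 (fun y : Fin 2 → ℝ => h * D2 1 u y + y 1 * u y) z := by
    rw [D2_add 0 ((hv0.const_mul (A 0 0)) z)
        ((hv1.const_mul (A 1 0)) z),
      D2_const_mul 0 (A 0 0) (hv0 z),
      D2_const_mul 0 (A 1 0) (hv1 z)]
  have e1 : D2 1 (fun y => A 0 1 * (h * D2 0 u y + deriv V (y 0) * u y)
      + A 1 1 * (h * D2 1 u y + y 1 * u y)) z
      = A 0 1 * D2 1 (fun y : Fin 2 → ℝ => h * D2 0 u y + deriv V (y 0) * u y) z
        + A 1 1 * D2 1 (fun y : Fin 2 → ℝ => h * D2 1 u y + y 1 * u y) z := by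
    rw [D2_add 1 ((hv0.const_mul (A 0 1)) z)
        ((hv1.const_mul (A 1 1)) z),
      D2_const_mul 1 (A 0 1) (hv0 z),
      D2_const_mul 1 (A 1 1) (hv1 z)]
  rw [e0, e1, hDv0 0, hDv0 1, hDv1 0, hDv1 1]
  simp only [w, hA00, hA01, hA10, hA11, hschwarz, Pi.single_eq_same, Pi.single_apply]
  norm_num
  ring
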